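/- arXiv:2509.04863 — 4 statements merged into one kernel-verified Lean document; each statement's English description precedes it below -/
import Mathlib

section
/- Let R be a ring and let f : M₁ → M₀ be a morphism of R-modules, regarded as an object of the arrow category Arrow(Mod R). Then f is a projective object of Arrow(Mod R) if and only if f is isomorphic in Arrow(Mod R) to a direct sum (0 → P) ⊕ (id_Q : Q → Q) for some projective R-modules P and Q. -/
set_option maxHeartbeats 1000000
set_option synthInstance.maxHeartbeats 400000
open CategoryTheory CategoryTheory.Limits ZeroObject

variable {R : Type*} [Ring R]

/-- The componentwise direct sum of two objects of the arrow category of `ModuleCat R`. -/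
noncomputable def arrowSum (f g : Arrow (ModuleCat R)) : Arrow (ModuleCat R) :=
  Arrow.mk (biprod.map f.hom g.hom)

/-!
The evaluations `Arrow.leftFunc` and `Arrow.rightFunc` at the source and target of an arrow have
left adjoints `Q ↦ 𝟙 Q` and `P ↦ (0 ⟶ P)` and right adjoints `X ↦ (X ⟶ 0)` and `X ↦ 𝟙 X`, all of
which preserve epimorphisms. Hence `𝟙 Q` and `0 ⟶ P` are projective for projective `Q` and `P`,
and the source and target of a projective arrow are projective. A projective arrow `f` is
moreover a split monomorphism, and a split monomorphism `i : A ⟶ B` is isomorphic, as an arrow,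
to `(0 ⟶ coker i) ⊕ 𝟙 A`, where `coker i` is a retract of `B`.
-/

namespace CategoryTheory

namespace Arrow

variable {C : Type*} [Category C]

lemma epi_of_epi_left_of_epi_right {f g : Arrow C} (sq : f ⟶ g) (hl : Epi sq.left)
    (hr : Epi sq.right) : Epi sq where
  left_cancellation a b h := by
    ext
    · exact (cancel_epi sq.left).mp (congrArg CommaMorphism.left h)
    · exact (cancel_epi sq.right).mp (congrArg CommaMorphism.right h)

def idFunc : C ⥤ Arrow C where
  obj X := Arrow.mk (𝟙 X)
  map g := Arrow.homMk g g

def idFuncAdjLeftFunc : (idFunc : C ⥤ Arrow C) ⊣ leftFunc :=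
  Adjunction.mkOfHomEquiv
    { homEquiv X f :=
        { toFun φ := φ.left
          invFun g := Arrow.homMk g (g ≫ f.hom) (Category.id_comp _).symm
          left_inv φ := by ext; exacts [rfl, (Arrow.w φ).trans (Category.id_comp _)]
          right_inv g := rfl }
      homEquiv_naturality_left_symm _ _ := by ext; exacts [rfl, Category.assoc _ _ _]
      homEquiv_naturality_right _ _ := rfl }

def rightFuncAdjIdFunc : (rightFunc : Arrow C ⥤ C) ⊣ idFunc :=
  Adjunction.mkOfHomEquiv
    { homEquiv f X :=
        { toFun g := Arrow.homMk (f.hom ≫ g) g (Category.comp_id _)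
          invFun φ := φ.right
          left_inv g := rfl
          right_inv φ := by ext; exacts [((Category.comp_id _).symm.trans (Arrow.w φ)).symm, rfl] }
      homEquiv_naturality_left_symm _ _ := rfl
      homEquiv_naturality_right _ _ := by ext; exacts [(Category.assoc _ _ _).symm, rfl] }

instance : (idFunc : C ⥤ Arrow C).PreservesEpimorphisms where
  preserves g hg := epi_of_epi_left_of_epi_right (idFunc.map g) hg hg

instance : (rightFunc : Arrow C ⥤ C).PreservesEpimorphisms :=
  Functor.preservesEpimorphisms_of_adjunction rightFuncAdjIdFunc

lemma projective_right (f : Arrow C) [hf : Projective f] : Projective f.right :=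
  rightFuncAdjIdFunc.map_projective f hf

section ZeroObject

variable [HasZeroMorphisms C] [HasZeroObject C]

noncomputable def fromZero : C ⥤ Arrow C where
  obj X := Arrow.mk (0 : 0 ⟶ X)
  map g := Arrow.homMk 0 g

noncomputable def toZero : C ⥤ Arrow C where
  obj X := Arrow.mk (0 : X ⟶ 0)
  map g := Arrow.homMk g 0

noncomputable def fromZeroAdjRightFunc : (fromZero : C ⥤ Arrow C) ⊣ rightFunc :=
  Adjunction.mkOfHomEquiv
    { homEquiv X f :=
        { toFun φ := φ.right
          invFun g := Arrow.homMk 0 g ((isZero_zero C).eq_of_src _ _)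
          left_inv φ := by ext; exacts [(isZero_zero C).eq_of_src _ _, rfl]
          right_inv g := rfl }
      homEquiv_naturality_left_symm _ _ := by ext; exacts [(isZero_zero C).eq_of_src _ _, rfl]
      homEquiv_naturality_right _ _ := rfl }

noncomputable def leftFuncAdjToZero : (leftFunc : Arrow C ⥤ C) ⊣ toZero :=
  Adjunction.mkOfHomEquiv
    { homEquiv f X :=
        { toFun g := Arrow.homMk g 0 ((isZero_zero C).eq_of_tgt _ _)
          invFun φ := φ.left
          left_inv g := rfl
          right_inv φ := by ext; exacts [rfl, (isZero_zero C).eq_of_tgt _ _] }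
      homEquiv_naturality_left_symm _ _ := rfl
      homEquiv_naturality_right _ _ := by ext; exacts [rfl, (isZero_zero C).eq_of_tgt _ _] }

instance : (toZero : C ⥤ Arrow C).PreservesEpimorphisms where
  preserves g hg := epi_of_epi_left_of_epi_right (toZero.map g) hg ((isZero_zero C).epi _)

instance : (leftFunc : Arrow C ⥤ C).PreservesEpimorphisms :=
  Functor.preservesEpimorphisms_of_adjunction leftFuncAdjToZero

lemma projective_left (f : Arrow C) [hf : Projective f] : Projective f.left :=
  leftFuncAdjToZero.map_projective f hf

lemma projective_mk_id (Q : C) [hQ : Projective Q] : Projective (Arrow.mk (𝟙 Q)) :=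
  idFuncAdjLeftFunc.map_projective Q hQ

lemma projective_mk_zero (P : C) [hP : Projective P] : Projective (Arrow.mk (0 : 0 ⟶ P)) :=
  fromZeroAdjRightFunc.map_projective P hP

end ZeroObject

section Biproducts

variable [HasZeroMorphisms C] [HasBinaryBiproducts C]

lemma projective_mk_biprod_map (f g : Arrow C) [Projective f] [Projective g] :
    Projective (Arrow.mk (biprod.map f.hom g.hom)) where
  factors φ e _ := by
    obtain ⟨a, ha⟩ := Projective.factors (Arrow.homMk biprod.inl biprod.inl (by simp) ≫ φ) e
    obtain ⟨b, hb⟩ := Projective.factors (Arrow.homMk biprod.inr biprod.inr (by simp) ≫ φ) e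
    refine ⟨Arrow.homMk (biprod.desc a.left b.left) (biprod.desc a.right b.right) ?_, ?_⟩
    · apply biprod.hom_ext' <;> simp
    · ext <;> apply biprod.hom_ext'
      exacts [(biprod.inl_desc_assoc _ _ _).trans (congrArg CommaMorphism.left ha),
        (biprod.inr_desc_assoc _ _ _).trans (congrArg CommaMorphism.left hb),
        (biprod.inl_desc_assoc _ _ _).trans (congrArg CommaMorphism.right ha),
        (biprod.inr_desc_assoc _ _ _).trans (congrArg CommaMorphism.right hb)]

/-- Lifting `𝟙 f` through the epimorphism `(biprod.inl : f.left ⟶ f.left ⊞ f.right) ⟶ f`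
makes `f` a retract of the split monomorphism `biprod.inl`. -/
lemma isSplitMono_hom_of_projective (f : Arrow C) [Projective f] : IsSplitMono f.hom := by
  let e : Arrow.mk (biprod.inl : f.left ⟶ f.left ⊞ f.right) ⟶ f :=
    Arrow.homMk (𝟙 f.left) (biprod.desc f.hom (𝟙 f.right)) (by simp)
  have : Epi e.right := epi_of_epi_fac (biprod.inr_desc f.hom (𝟙 f.right))
  have : Epi e := epi_of_epi_left_of_epi_right e (inferInstanceAs (Epi (𝟙 f.left))) this
  let s := Projective.factorThru (𝟙 f) e
  have hs : s.left = 𝟙 f.left :=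
    (Category.comp_id _).symm.trans
      (congrArg CommaMorphism.left (Projective.factorThru_comp (𝟙 f) e))
  refine IsSplitMono.mk' ⟨s.right ≫ biprod.fst, ?_⟩
  calc f.hom ≫ s.right ≫ biprod.fst = (s.left ≫ biprod.inl) ≫ biprod.fst := by
        rw [← Category.assoc]; exact congrArg (· ≫ biprod.fst) (Arrow.w s).symm
    _ = 𝟙 f.left := by rw [Category.assoc, biprod.inl_fst, Category.comp_id, hs]

end Biproducts

end Arrow

section Abelian

variable {C : Type*} [Category C] [Abelian C]

noncomputable def cokernelSequenceSplitting {A B : C} (i : A ⟶ B) [IsSplitMono i] :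
    (ShortComplex.cokernelSequence i).Splitting :=
  .ofExactOfRetraction _ (ShortComplex.cokernelSequence_exact i) (retraction i : B ⟶ A)
    (IsSplitMono.id i) inferInstance

lemma projective_cokernel_of_isSplitMono {A B : C} (i : A ⟶ B) [IsSplitMono i] [Projective B] :
    Projective (cokernel i) :=
  (Retract.mk (Y := B) (cokernelSequenceSplitting i).s (cokernel.π i)
    (cokernelSequenceSplitting i).s_g).projective

noncomputable def Arrow.isoMkBiprodMapOfIsSplitMono {A B : C} (i : A ⟶ B) [IsSplitMono i] :
    Arrow.mk i ≅ Arrow.mk (biprod.map (0 : 0 ⟶ cokernel i) (𝟙 A)) :=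
  Arrow.isoMk (isoZeroBiprod (isZero_zero C))
    ((cokernelSequenceSplitting i).isoBinaryBiproduct ≪≫ biprod.braiding _ _)
    (by
      show _ = i ≫ biprod.lift (retraction i) (cokernel.π i) ≫ (biprod.braiding _ _).hom
      apply biprod.hom_ext <;> simp)

end Abelian

end CategoryTheory

/-- An object `f : M₁ → M₀` of the arrow category of `ModuleCat R` is projective iff it is
isomorphic to a direct sum `(0 → P) ⊕ (id_Q : Q → Q)` with `P` and `Q` projective. -/
theorem arrow_projective_iff (f : Arrow (ModuleCat R)) :
    Projective f ↔ ∃ (P Q : ModuleCat R), Projective P ∧ Projective Q ∧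
      Nonempty (f ≅ arrowSum (Arrow.mk (0 : (0 : ModuleCat R) ⟶ P)) (Arrow.mk (𝟙 Q))) := by
  constructor
  · intro _
    have := Arrow.isSplitMono_hom_of_projective f
    have := Arrow.projective_right f
    exact ⟨cokernel f.hom, f.left, projective_cokernel_of_isSplitMono f.hom,
      Arrow.projective_left f, ⟨Arrow.isoMkBiprodMapOfIsSplitMono f.hom⟩⟩
  · rintro ⟨P, Q, hP, hQ, ⟨e⟩⟩
    have := Arrow.projective_mk_zero P
    have := Arrow.projective_mk_id Q
    exact Projective.of_iso e.symm (Arrow.projective_mk_biprod_map _ _)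
end

section
/- Let R be a ring and let f : M₁ → M₀ be a morphism of R-modules, regarded as an object of Arrow(Mod R). Then f is an injective object of Arrow(Mod R) if and only if f is isomorphic in Arrow(Mod R) to a direct sum (I → 0) ⊕ (id_J : J → J) for some injective R-modules I and J. -/
set_option maxHeartbeats 1000000
set_option synthInstance.maxHeartbeats 400000

open CategoryTheory CategoryTheory.Limits ZeroObject

variable {R : Type*} [Ring R]

/-!
A morphism of arrows is a monomorphism exactly when both components are, so the arrows `𝟙 X`
and `⊥ → X` turn extension problems in `C` into extension problems in `Arrow C`. Hence both ends
of an injective arrow `f : M₁ → M₀` are injective, and extending `(⊥ → M₀) ⟶ f` along the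
monomorphism `(⊥ → M₀) ⟶ 𝟙 M₀` produces a section of `f`. A split epimorphism with kernel `K` is
isomorphic to `(K → 0) ⊕ 𝟙 M₀`, and `K` is a retract of `M₁`, hence injective. Conversely,
`(I → 0) ⊕ 𝟙 J` is the product of `I → 0` and `𝟙 J` in `Arrow C`, and these two arrows are
injective because maps into them are determined by one component.
-/

namespace CategoryTheory.Arrow

variable {C : Type*} [Category C]

instance mono_homMk {f g : Arrow C} (l : f.left ⟶ g.left) (r : f.right ⟶ g.right)
    (w : l ≫ g.hom = f.hom ≫ r) [Mono l] [Mono r] : Mono (Arrow.homMk l r w) :=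
  ⟨fun u v h => Arrow.hom_ext _ _ ((cancel_mono l).1 (by simpa using congrArg Hom.left h))
    ((cancel_mono r).1 (by simpa using congrArg Hom.right h))⟩

lemma mono_right [HasInitial C] {f g : Arrow C} (sq : f ⟶ g) [Mono sq] : Mono sq.right where
  right_cancellation {Z} u v h := by
    let lift (w : Z ⟶ f.right) : Arrow.mk (initial.to Z) ⟶ f := Arrow.homMk (initial.to _) w
    have : lift u ≫ sq = lift v ≫ sq :=
      Arrow.hom_ext _ _ (initial.hom_ext _ _) (by simpa [lift] using h)
    simpa [lift] using congrArg Hom.right ((cancel_mono sq).1 this)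

lemma injective_left (f : Arrow C) [Injective f] : Injective f.left where
  factors {A B} g u _ := by
    let u' : Arrow.mk (𝟙 A) ⟶ Arrow.mk (𝟙 B) := Arrow.homMk u u (by simp)
    obtain ⟨q, hq⟩ := Injective.factors (Arrow.homMk g (g ≫ f.hom) : Arrow.mk (𝟙 A) ⟶ f) u'
    exact ⟨q.left, by simpa [u'] using congrArg Hom.left hq⟩

lemma injective_right [HasInitial C] (f : Arrow C) [Injective f] : Injective f.right where
  factors {A B} g u _ := by
    let u' : Arrow.mk (initial.to A) ⟶ Arrow.mk (initial.to B) :=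
      Arrow.homMk (𝟙 _) u (initial.hom_ext _ _)
    obtain ⟨q, hq⟩ := Injective.factors
      (Arrow.homMk (initial.to _) g : Arrow.mk (initial.to A) ⟶ f) u'
    exact ⟨q.right, by simpa [u'] using congrArg Hom.right hq⟩

lemma isSplitEpi_hom [HasInitial C] [InitialMonoClass C] (f : Arrow C) [Injective f] :
    IsSplitEpi f.hom := by
  let m : Arrow.mk (initial.to f.right) ⟶ Arrow.mk (𝟙 f.right) :=
    Arrow.homMk (initial.to _) (𝟙 _) (initial.hom_ext _ _)
  obtain ⟨q, hq⟩ := Injective.factors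
    (Arrow.homMk (initial.to _) (𝟙 _) : Arrow.mk (initial.to f.right) ⟶ f) m
  have hq_right : q.right = 𝟙 f.right := by simpa [m] using congrArg Hom.right hq
  exact IsSplitEpi.mk' ⟨q.left, (Arrow.w q).trans (by simp [hq_right])⟩

instance injective_mk_zero [HasZeroMorphisms C] [HasZeroObject C] (I : C) [Injective I] :
    Injective (Arrow.mk (0 : I ⟶ 0)) where
  factors g m _ :=
    ⟨Arrow.homMk (Injective.factorThru (J := I) g.left m.left) 0 ((isZero_zero C).eq_of_tgt _ _),
      Arrow.hom_ext _ _ (by simp) ((isZero_zero C).eq_of_tgt _ _)⟩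

instance injective_mk_id [HasInitial C] (J : C) [Injective J] : Injective (Arrow.mk (𝟙 J)) where
  factors {X Y} g m _ := by
    have := mono_right m
    let w : Y.right ⟶ J := Injective.factorThru g.right m.right
    refine ⟨Arrow.homMk (Y.hom ≫ w) w, Arrow.hom_ext _ _ ?_ (by simp [w])⟩
    calc m.left ≫ Y.hom ≫ w = X.hom ≫ m.right ≫ w := Arrow.w_assoc m w
      _ = g.left := by simpa [w] using (Arrow.w g).symm

section Biproduct

variable [HasZeroMorphisms C] [HasBinaryBiproducts C]

noncomputable def isLimitBiprodMapFan (f g : Arrow C) :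
    IsLimit (BinaryFan.mk (P := Arrow.mk (biprod.map f.hom g.hom))
      (Arrow.homMk biprod.fst biprod.fst) (Arrow.homMk biprod.snd biprod.snd)) :=
  BinaryFan.IsLimit.mk _
    (fun a b => Arrow.homMk (biprod.lift a.left b.left) (biprod.lift a.right b.right))
    (fun a b => by ext <;> simp) (fun a b => by ext <;> simp)
    (fun a b m ha hb => by ext <;> apply biprod.hom_ext <;> simp [← ha, ← hb])

instance injective_mk_biprodMap (f g : Arrow C) [Injective f] [Injective g] :
    Injective (Arrow.mk (biprod.map f.hom g.hom)) :=
  have : HasBinaryProduct f g := ⟨⟨⟨_, isLimitBiprodMapFan f g⟩⟩⟩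
  Injective.of_iso (limit.isLimit _ |>.conePointUniqueUpToIso (isLimitBiprodMapFan f g))
    (inferInstanceAs (Injective (f ⨯ g)))

end Biproduct

end CategoryTheory.Arrow

namespace CategoryTheory.ShortComplex

variable {C : Type*} [Category C]

noncomputable def kernelSequenceSplittingOfIsSplitEpi [Abelian C] {X Y : C} (f : X ⟶ Y)
    [IsSplitEpi f] : (kernelSequence f).Splitting :=
  .ofExactOfSection _ (kernelSequence_exact f) (section_ f : Y ⟶ X) (IsSplitEpi.id f)
    inferInstance

namespace Splitting

variable [Preadditive C] {S : ShortComplex C}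

lemma injective_X₁ (h : S.Splitting) [Injective S.X₂] : Injective S.X₁ :=
  Retract.injective ⟨S.f, h.r, h.f_r⟩

noncomputable def arrowIsoBiprodMap [HasZeroObject C] [HasBinaryBiproducts C] (h : S.Splitting) :
    Arrow.mk S.g ≅ Arrow.mk (biprod.map (0 : S.X₁ ⟶ 0) (𝟙 S.X₃)) :=
  Arrow.isoMk h.isoBinaryBiproduct (isoZeroBiprod (isZero_zero C))

end Splitting

end CategoryTheory.ShortComplex

open Arrow ShortComplex in
/-- An object `f : M₁ → M₀` of the arrow category of `ModuleCat R` is injective iff it is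
isomorphic to a direct sum `(I → 0) ⊕ (id_J : J → J)` with `I` and `J` injective. -/
theorem arrow_injective_iff (f : Arrow (ModuleCat R)) :
    Injective f ↔ ∃ (I J : ModuleCat R), Injective I ∧ Injective J ∧
      Nonempty (f ≅ arrowSum (Arrow.mk (0 : I ⟶ (0 : ModuleCat R))) (Arrow.mk (𝟙 J))) := by
  constructor
  · intro hf
    have := isSplitEpi_hom f
    let h := kernelSequenceSplittingOfIsSplitEpi f.hom
    have : Injective (kernelSequence f.hom).X₂ := injective_left f
    exact ⟨kernel f.hom, f.right, h.injective_X₁, injective_right f, ⟨h.arrowIsoBiprodMap⟩⟩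
  · rintro ⟨I, J, hI, hJ, ⟨e⟩⟩
    exact Injective.of_iso e.symm (injective_mk_biprodMap _ _)
end

section
/- Let C be an additive category in which every morphism has a kernel, and let M : C^op → Ab be a finitely presented additive functor, i.e. there is a morphism f : A₁ → A₀ of C and an exact sequence Hom(-, A₁) → Hom(-, A₀) → M → 0 of additive functors. Then, with K = ker f, the sequence 0 → Hom(-, K) → Hom(-, A₁) → Hom(-, A₀) → M → 0 is exact; in particular M has a projective resolution of length at most 2 by representable functors. -/
open CategoryTheory CategoryTheory.Limits Opposite

namespace CategoryTheory

variable {C : Type*} [Category C] [Preadditive C]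

theorem preadditiveYoneda_map_app_injective_of_mono {K A : C} (m : K ⟶ A) [Mono m] (X : C) :
    Function.Injective ((preadditiveYoneda.map m).app (op X)) :=
  fun g h (hgh : g ≫ m = h ≫ m) => (cancel_mono m).mp hgh

theorem exact_preadditiveYoneda_map_kernelι_app {A₁ A₀ : C} (f : A₁ ⟶ A₀) [HasKernel f]
    (X : C) :
    Function.Exact ((preadditiveYoneda.map (kernel.ι f)).app (op X))
      ((preadditiveYoneda.map f).app (op X)) := by
  intro g
  constructor
  · intro (hg : g ≫ f = 0)
    exact ⟨kernel.lift f g hg, kernel.lift_ι f g hg⟩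
  · rintro ⟨(h : X ⟶ kernel f), rfl⟩
    change (h ≫ kernel.ι f) ≫ f = 0
    rw [Category.assoc, kernel.condition, comp_zero]

end CategoryTheory

theorem finitely_presented_functor_resolution_general
    {C : Type*} [Category C] [Preadditive C] [HasKernels C]
    (M : Cᵒᵖ ⥤ AddCommGrpCat)
    {A₁ A₀ : C} (f : A₁ ⟶ A₀)
    (π : preadditiveYoneda.obj A₀ ⟶ M)
    (hπ : ∀ X : C, Function.Surjective (π.app (op X)))
    (hex : ∀ X : C, Function.Exact ((preadditiveYoneda.map f).app (op X)) (π.app (op X))) :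
    ∀ X : C,
      Function.Injective ((preadditiveYoneda.map (kernel.ι f)).app (op X)) ∧
      Function.Exact ((preadditiveYoneda.map (kernel.ι f)).app (op X))
        ((preadditiveYoneda.map f).app (op X)) ∧
      Function.Exact ((preadditiveYoneda.map f).app (op X)) (π.app (op X)) ∧
      Function.Surjective (π.app (op X)) := fun X =>
  ⟨preadditiveYoneda_map_app_injective_of_mono (kernel.ι f) X,
    exact_preadditiveYoneda_map_kernelι_app f X, hex X, hπ X⟩

/-- Let `C` be an additive category with kernels and `M : Cᵒᵖ ⥤ Ab` an additive functor which is
finitely presented by a morphism `f : A₁ ⟶ A₀`, i.e. there is an (objectwise) exact sequence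
`Hom(-, A₁) → Hom(-, A₀) → M → 0`. Then, with `K = ker f`, the sequence
`0 → Hom(-, K) → Hom(-, A₁) → Hom(-, A₀) → M → 0` is (objectwise) exact; in particular `M` has
a projective resolution of length at most `2` by representable functors. -/
theorem finitely_presented_functor_resolution
    {C : Type*} [Category C] [Preadditive C] [HasKernels C]
    (M : Cᵒᵖ ⥤ AddCommGrpCat) [M.Additive]
    {A₁ A₀ : C} (f : A₁ ⟶ A₀)
    (π : preadditiveYoneda.obj A₀ ⟶ M)
    (hπ : ∀ X : C, Function.Surjective (π.app (op X)))
    (hex : ∀ X : C, Function.Exact ((preadditiveYoneda.map f).app (op X)) (π.app (op X))) :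
    ∀ X : C,
      Function.Injective ((preadditiveYoneda.map (kernel.ι f)).app (op X)) ∧
      Function.Exact ((preadditiveYoneda.map (kernel.ι f)).app (op X))
        ((preadditiveYoneda.map f).app (op X)) ∧
      Function.Exact ((preadditiveYoneda.map f).app (op X)) (π.app (op X)) ∧
      Function.Surjective (π.app (op X)) :=
  finitely_presented_functor_resolution_general M f π hπ hex
end

section
/- Let k be a field, let Λ be a finite-dimensional self-injective k-algebra and let ν be a k-algebra automorphism of Λ such that the (Λ,Λ)-bimodule _νΛ (Λ with left action twisted by ν) is isomorphic to the bimodule Hom_k(Λ, k) (i.e. ν is a Nakayama automorphism of Λ). Then the 3×3 matrix algebra T with entries T₁₁ = T₂₂ = T₃₃ = T₂₁ = T₃₂ = Λ, T₁₃ = _νΛ, and T₁₂ = T₂₃ = T₃₁ = 0, with multiplication induced by matrix multiplication and the Λ-bimodule structures, is again a self-injective finite-dimensional k-algebra. -/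
set_option linter.unusedSectionVars false

universe u

variable {k : Type u} [Field k] {Λ : Type u} [Ring Λ] [Algebra k Λ]

/-- The underlying additive group of the twisted `3×3` matrix algebra `T`: an element is the
tuple of its six possibly nonzero entries `(t₁₁, t₂₁, t₂₂, t₃₂, t₃₃, t₁₃)` (the entries
`t₁₂, t₂₃, t₃₁` being zero). -/
structure TAlg (Λ : Type u) where
  toProd : Λ × Λ × Λ × Λ × Λ × Λ

namespace TAlg

lemma toProd_injective : Function.Injective (toProd (Λ := Λ)) := by
  rintro ⟨a⟩ ⟨b⟩ h; cases h; rfl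

instance : Zero (TAlg Λ) := ⟨⟨0⟩⟩
instance : Add (TAlg Λ) := ⟨fun x y => ⟨x.toProd + y.toProd⟩⟩
instance : Neg (TAlg Λ) := ⟨fun x => ⟨-x.toProd⟩⟩
instance : Sub (TAlg Λ) := ⟨fun x y => ⟨x.toProd - y.toProd⟩⟩
instance : SMul ℕ (TAlg Λ) := ⟨fun n x => ⟨n • x.toProd⟩⟩
instance : SMul ℤ (TAlg Λ) := ⟨fun n x => ⟨n • x.toProd⟩⟩

instance : AddCommGroup (TAlg Λ) :=
  toProd_injective.addCommGroup _ rfl (fun _ _ => rfl) (fun _ => rfl) (fun _ _ => rfl)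
    (fun _ _ => rfl) (fun _ _ => rfl)

/-- `toProd` as an additive group homomorphism. -/
def toProdHom : TAlg Λ →+ Λ × Λ × Λ × Λ × Λ × Λ where
  toFun := toProd
  map_zero' := rfl
  map_add' _ _ := rfl

instance : SMul k (TAlg Λ) := ⟨fun c x => ⟨c • x.toProd⟩⟩

instance : Module k (TAlg Λ) :=
  toProd_injective.module k toProdHom (fun _ _ => rfl)

variable (ν : Λ ≃ₐ[k] Λ)

/-- The multiplication of `T`, induced by matrix multiplication and the bimodule structures:
the `(1,3)` entries live in the twisted bimodule `_νΛ`, whence the twist by `ν` when an entry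
`t₁₁ ∈ T₁₁ = Λ` acts on the left on an entry of `T₁₃ = _νΛ`; products landing in the zero
entries `(1,2), (2,3), (3,1)` are discarded. -/
def tMul : TAlg Λ → TAlg Λ → TAlg Λ
  | ⟨a11, a21, a22, a32, a33, a13⟩, ⟨b11, b21, b22, b32, b33, b13⟩ =>
    ⟨a11 * b11, a21 * b11 + a22 * b21, a22 * b22, a32 * b22 + a33 * b32, a33 * b33,
      ν a11 * b13 + a13 * b33⟩

/-- The unit of `T`: the identity matrix. -/
def tOne : TAlg Λ := ⟨(1, 0, 1, 0, 1, 0)⟩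

lemma tMul_assoc (x y z : TAlg Λ) : tMul ν (tMul ν x y) z = tMul ν x (tMul ν y z) := by
  rcases x with ⟨⟨a, b, c, d, e, f⟩⟩; rcases y with ⟨⟨a', b', c', d', e', f'⟩⟩
  rcases z with ⟨⟨a'', b'', c'', d'', e'', f''⟩⟩
  simp only [tMul, tOne, mk.injEq, Prod.mk.injEq, mul_add, add_mul, mul_assoc, map_mul]
  and_intros <;> first | trivial | abel

lemma tOne_mul (x : TAlg Λ) : tMul ν (tOne (Λ := Λ)) x = x := by
  rcases x with ⟨⟨a, b, c, d, e, f⟩⟩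
  simp [tMul, tOne]

lemma tMul_one (x : TAlg Λ) : tMul ν x (tOne (Λ := Λ)) = x := by
  rcases x with ⟨⟨a, b, c, d, e, f⟩⟩
  simp [tMul, tOne]

lemma tMul_add (x y z : TAlg Λ) : tMul ν x (y + z) = tMul ν x y + tMul ν x z := by
  rcases x with ⟨⟨a, b, c, d, e, f⟩⟩; rcases y with ⟨⟨a', b', c', d', e', f'⟩⟩
  rcases z with ⟨⟨a'', b'', c'', d'', e'', f''⟩⟩
  show tMul ν _ ⟨_⟩ = (⟨(tMul ν _ _).toProd + (tMul ν _ _).toProd⟩ : TAlg Λ)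
  simp only [tMul, Prod.mk_add_mk, mk.injEq, Prod.mk.injEq, mul_add, add_mul]
  and_intros <;> first | trivial | abel

lemma add_tMul (x y z : TAlg Λ) : tMul ν (x + y) z = tMul ν x z + tMul ν y z := by
  rcases x with ⟨⟨a, b, c, d, e, f⟩⟩; rcases y with ⟨⟨a', b', c', d', e', f'⟩⟩
  rcases z with ⟨⟨a'', b'', c'', d'', e'', f''⟩⟩
  show tMul ν ⟨_⟩ _ = (⟨(tMul ν _ _).toProd + (tMul ν _ _).toProd⟩ : TAlg Λ)
  simp only [tMul, Prod.mk_add_mk, mk.injEq, Prod.mk.injEq, mul_add, add_mul, map_add]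
  and_intros <;> first | trivial | abel

lemma zero_tMul (x : TAlg Λ) : tMul ν (0 : TAlg Λ) x = 0 := by
  rcases x with ⟨⟨a, b, c, d, e, f⟩⟩
  show tMul ν ⟨(0, 0, 0, 0, 0, 0)⟩ _ = _
  simp [tMul]
  rfl

lemma tMul_zero (x : TAlg Λ) : tMul ν x (0 : TAlg Λ) = 0 := by
  rcases x with ⟨⟨a, b, c, d, e, f⟩⟩
  show tMul ν _ ⟨(0, 0, 0, 0, 0, 0)⟩ = _
  simp [tMul]
  rfl

/-- The ring structure of the twisted `3×3` matrix algebra `T`. -/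
@[reducible]
def tRing (ν : Λ ≃ₐ[k] Λ) : Ring (TAlg Λ) :=
  { (inferInstanceAs (AddCommGroup (TAlg Λ)) : AddCommGroup (TAlg Λ)) with
    mul := tMul ν
    one := tOne
    mul_assoc := tMul_assoc ν
    one_mul := tOne_mul ν
    mul_one := tMul_one ν
    left_distrib := tMul_add ν
    right_distrib := add_tMul ν
    zero_mul := zero_tMul ν
    mul_zero := tMul_zero ν }

/-- The `k`-algebra structure of the twisted `3×3` matrix algebra `T`. -/
def tAlgebra :
    letI : Ring (TAlg Λ) := tRing ν
    Algebra k (TAlg Λ) := by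
  letI : Ring (TAlg Λ) := tRing ν
  refine Algebra.ofModule ?_ ?_
  · rintro r ⟨⟨a, b, c, d, e, f⟩⟩ ⟨⟨a', b', c', d', e', f'⟩⟩
    show tMul ν ⟨r • _⟩ _ = (⟨r • (tMul ν _ _).toProd⟩ : TAlg Λ)
    simp only [tMul, Prod.smul_mk, mk.injEq, Prod.mk.injEq, smul_add, smul_mul_assoc,
      map_smul]
  · rintro r ⟨⟨a, b, c, d, e, f⟩⟩ ⟨⟨a', b', c', d', e', f'⟩⟩
    show tMul ν _ ⟨r • _⟩ = (⟨r • (tMul ν _ _).toProd⟩ : TAlg Λ)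
    simp only [tMul, Prod.smul_mk, mk.injEq, Prod.mk.injEq, smul_add, mul_smul_comm]

end TAlg

/-!
`T` is a Frobenius algebra. With `ε x = e x 1`, the bimodule isomorphism `e` says
`e x y = ε (x * y)` and `ε (ν a * x) = ε (x * a)`, so `ε` is a nondegenerate form on `Λ` with
Nakayama automorphism `ν`. On `T` take `λ t = ε (t₂₁ + t₃₂ + t₁₃)`: the entries `(2,1)`,
`(3,2)`, `(1,3)` sit at the positions of a permutation, so in `λ (t * u)` every entry of `t`
is paired with exactly one entry of `u`, and `λ` is nondegenerate (the twist by `ν` in the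
`(1,3)` entry is absorbed by `ε (ν a * x) = ε (x * a)`). A finite-dimensional algebra with a
nondegenerate form is right self-injective: `t ↦ λ (t * ·)` identifies it with its `k`-dual, and
Baer's criterion reduces to extending a `k`-linear functional from a right ideal.
-/

section Frobenius

variable {K A : Type*} [Field K] [Ring A] [Algebra K A] [hA : FiniteDimensional K A]
  {ε : A →ₗ[K] K}

theorem exists_forall_form_mul_eq_of_nondegenerate (hε : ∀ t, (∀ u, ε (t * u) = 0) → t = 0)
    (φ : Module.Dual K A) : ∃ t, ∀ u, ε (t * u) = φ u := by
  have hinj : Function.Injective ((LinearMap.mul K A).compr₂ ε) := by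
    rw [← LinearMap.ker_eq_bot, LinearMap.ker_eq_bot']
    exact fun t ht => hε t fun u => LinearMap.congr_fun ht u
  obtain ⟨t, ht⟩ := (LinearMap.injective_iff_surjective_of_finrank_eq_finrank
    (Subspace.dual_finrank_eq (K := K) (V := A)).symm).mp hinj φ
  exact ⟨t, fun u => LinearMap.congr_fun ht u⟩

theorem Module.Injective.op_self_of_nondegenerate
    (hε : ∀ t, (∀ u, ε (t * u) = 0) → t = 0) : Module.Injective Aᵐᵒᵖ A := by
  refine Module.Baer.injective fun I g => ?_
  obtain ⟨φ, hφ⟩ := LinearMap.exists_extend (p := I.restrictScalars K) (ε ∘ₗ g.restrictScalars K)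
  obtain ⟨t, ht⟩ := exists_forall_form_mul_eq_of_nondegenerate hε
    (φ ∘ₗ (MulOpposite.opLinearEquiv K).toLinearMap)
  refine ⟨LinearMap.toSpanSingleton Aᵐᵒᵖ A t, fun x hx => ?_⟩
  suffices ∀ u, ε (t * (x.unop * u)) = ε (g ⟨x, hx⟩ * u) by
    simpa [sub_eq_zero, mul_assoc] using hε (t * x.unop - g ⟨x, hx⟩) fun u => by
      rw [sub_mul, map_sub, mul_assoc, this, sub_self]
  intro u
  have hux : MulOpposite.op u * x ∈ I := I.smul_mem _ hx
  calc ε (t * (x.unop * u)) = φ (MulOpposite.op u * x) := ht _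
    _ = ε (g ⟨_, hux⟩) := LinearMap.congr_fun hφ ⟨_, hux⟩
    _ = ε (g ⟨x, hx⟩ * u) := by
      rw [show (⟨_, hux⟩ : I) = MulOpposite.op u • ⟨x, hx⟩ from rfl, map_smul]; rfl

end Frobenius

namespace TAlg

def linearEquivProd : TAlg Λ ≃ₗ[k] Λ × Λ × Λ × Λ × Λ × Λ where
  toFun := toProd
  invFun := mk
  map_add' _ _ := rfl
  map_smul' _ _ := rfl

def sumEntries : TAlg Λ →ₗ[k] Λ where
  toFun t := t.toProd.2.1 + t.toProd.2.2.2.1 + t.toProd.2.2.2.2.2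
  map_add' := fun ⟨_, b, _, d, _, f⟩ ⟨_, b', _, d', _, f'⟩ =>
    show (b + b') + (d + d') + (f + f') = (b + d + f) + (b' + d' + f') by abel
  map_smul' := fun r ⟨_, b, _, d, _, f⟩ =>
    show r • b + r • d + r • f = r • (b + d + f) by rw [smul_add, smul_add]

def frobeniusForm (e : Λ ≃ₗ[k] (Λ →ₗ[k] k)) : TAlg Λ →ₗ[k] k :=
  e.toLinearMap.flip 1 ∘ₗ sumEntries

lemma frobeniusForm_mk (e : Λ ≃ₗ[k] (Λ →ₗ[k] k)) (a₁₁ a₂₁ a₂₂ a₃₂ a₃₃ a₁₃ : Λ) :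
    frobeniusForm e ⟨(a₁₁, a₂₁, a₂₂, a₃₂, a₃₃, a₁₃)⟩ = e (a₂₁ + a₃₂ + a₁₃) 1 := rfl

lemma eq_zero_of_frobeniusForm_tMul_eq_zero (ν : Λ ≃ₐ[k] Λ) (e : Λ ≃ₗ[k] (Λ →ₗ[k] k))
    (he₁ : ∀ a x y : Λ, e (ν a * x) y = e x (y * a))
    (he₂ : ∀ x b y : Λ, e (x * b) y = e x (b * y)) {t : TAlg Λ}
    (ht : ∀ u, frobeniusForm e (tMul ν t u) = 0) : t = 0 := by
  obtain ⟨a₁₁, a₂₁, a₂₂, a₃₂, a₃₃, a₁₃⟩ := t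
  have left_sep : ∀ x : Λ, (∀ y, e x y = 0) → x = 0 := fun x hx =>
    e.map_eq_zero_iff.mp (LinearMap.ext hx)
  have right_sep : ∀ x : Λ, (∀ y, e y x = 0) → x = 0 := fun x hx =>
    (Module.forall_dual_apply_eq_zero_iff k x).mp fun φ => by
      obtain ⟨y, rfl⟩ := e.surjective φ; exact hx y
  have h₁₁ : a₁₁ = 0 := right_sep _ fun y => by
    simpa [tMul, frobeniusForm_mk, he₁] using ht ⟨(0, 0, 0, 0, 0, y)⟩
  have h₂₁ : a₂₁ = 0 := left_sep _ fun y => by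
    simpa [tMul, frobeniusForm_mk, he₂] using ht ⟨(y, 0, 0, 0, 0, 0)⟩
  have h₂₂ : a₂₂ = 0 := left_sep _ fun y => by
    simpa [tMul, frobeniusForm_mk, he₂] using ht ⟨(0, y, 0, 0, 0, 0)⟩
  have h₃₂ : a₃₂ = 0 := left_sep _ fun y => by
    simpa [tMul, frobeniusForm_mk, he₂] using ht ⟨(0, 0, y, 0, 0, 0)⟩
  have h₃₃ : a₃₃ = 0 := left_sep _ fun y => by
    simpa [tMul, frobeniusForm_mk, he₂] using ht ⟨(0, 0, 0, y, 0, 0)⟩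
  have h₁₃ : a₁₃ = 0 := left_sep _ fun y => by
    simpa [tMul, frobeniusForm_mk, he₂] using ht ⟨(0, 0, 0, 0, y, 0)⟩
  subst h₁₁ h₂₁ h₂₂ h₃₂ h₃₃ h₁₃
  rfl

end TAlg

open TAlg in
theorem tAlg_finite_and_selfinjective_general
    (k : Type u) [Field k] (Λ : Type u) [Ring Λ] [Algebra k Λ]
    [FiniteDimensional k Λ]
    (ν : Λ ≃ₐ[k] Λ)
    -- `ν` is a Nakayama automorphism: a `(Λ,Λ)`-bimodule isomorphism `_νΛ ≅ Hom_k(Λ, k)`,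
    -- where `(a · f · b) (y) = f (b * y * a)` on the dual and `a · x · b = ν a * x * b` on `_νΛ`
    (e : Λ ≃ₗ[k] (Λ →ₗ[k] k))
    (he₁ : ∀ a x y : Λ, e (ν a * x) y = e x (y * a))
    (he₂ : ∀ x b y : Λ, e (x * b) y = e x (b * y)) :
    letI : Ring (TAlg Λ) := tRing ν
    letI : Algebra k (TAlg Λ) := tAlgebra ν
    Module.Finite k (TAlg Λ) ∧ Module.Injective (TAlg Λ)ᵐᵒᵖ (TAlg Λ) := by
  let _ : Ring (TAlg Λ) := tRing ν
  let _ : Algebra k (TAlg Λ) := tAlgebra ν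
  -- the `k`-module structure of `tAlgebra ν` is the one of `TAlg Λ` only up to unfolding
  -- `Algebra.ofModule`, so instance search cannot find finiteness for it
  have hfin : Module.Finite k (TAlg Λ) := .equiv (linearEquivProd (k := k)).symm
  exact ⟨hfin, Module.Injective.op_self_of_nondegenerate (hA := hfin) (ε := frobeniusForm e)
    fun _ ht => eq_zero_of_frobeniusForm_tMul_eq_zero ν e he₁ he₂ ht⟩

open TAlg in
/-- If `Λ` is a finite-dimensional self-injective `k`-algebra and `ν` is a Nakayama
automorphism of `Λ` (i.e. the twisted bimodule `_νΛ` is isomorphic to the bimodule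
`Hom_k(Λ, k)`), then the twisted `3×3` matrix algebra `T` (with diagonal entries `Λ`,
entries `T₂₁ = T₃₂ = Λ`, `T₁₃ = _νΛ` and the remaining entries zero) is again a
self-injective finite-dimensional `k`-algebra. -/
theorem tAlg_finite_and_selfinjective
    (k : Type u) [Field k] (Λ : Type u) [Ring Λ] [Algebra k Λ]
    [FiniteDimensional k Λ]
    -- `Λ` is self-injective: injective as a right module over itself
    (hΛ : Module.Injective Λᵐᵒᵖ Λ)
    (ν : Λ ≃ₐ[k] Λ)
    -- `ν` is a Nakayama automorphism: a `(Λ,Λ)`-bimodule isomorphism `_νΛ ≅ Hom_k(Λ, k)`,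
    -- where `(a · f · b) (y) = f (b * y * a)` on the dual and `a · x · b = ν a * x * b` on `_νΛ`
    (e : Λ ≃ₗ[k] (Λ →ₗ[k] k))
    (he₁ : ∀ a x y : Λ, e (ν a * x) y = e x (y * a))
    (he₂ : ∀ x b y : Λ, e (x * b) y = e x (b * y)) :
    letI : Ring (TAlg Λ) := tRing ν
    letI : Algebra k (TAlg Λ) := tAlgebra ν
    Module.Finite k (TAlg Λ) ∧ Module.Injective (TAlg Λ)ᵐᵒᵖ (TAlg Λ) :=
  tAlg_finite_and_selfinjective_general k Λ ν e he₁ he₂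
end
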